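/- arXiv:1807.06091 — 4 statements merged into one kernel-verified Lean document; each statement's English description precedes it below -/
import Mathlib

section
/- Closed-form iterated Gaussian mean learning: fix σ > 0, ξ > 0, δ : ℝ, and define the Bayesian update step upd (y : ℝ) (p : Measure ℝ) as the normalization of p.withDensity (fun r => ENNReal.ofReal (Real.exp (−(r − y)²/(2σ²)))). Then for every list L : List ℝ with n = L.length and S = L.sum, folding the updates over L starting from the prior gaussianReal δ ξ² yields L.foldr upd (gaussianReal δ ξ²) = gaussianReal ((S·ξ² + δ·σ²)/(n·ξ² + σ²)) ((ξ²·σ²)/(n·ξ² + σ²)). -/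
/-!
A Gaussian prior `N(m, v)` times the likelihood `exp (-(r - y)² / 2σ²)` is, after completing the
square in `r`, a constant multiple of the density of `N((y v + m σ²) / (v + σ²), v σ² / (v + σ²))`,
so normalising returns that Gaussian (for `v = 0` the prior is a Dirac mass and stays one). The
claimed closed form satisfies this one-step recursion, and the theorem follows by induction on the
list of observations.
-/

open MeasureTheory ProbabilityTheory Real
open scoped NNReal ENNReal

lemma inv_measure_univ_smul_smul {α : Type*} [MeasurableSpace α] (μ : Measure α)
    [IsProbabilityMeasure μ] {c : ℝ≥0∞} (hc₀ : c ≠ 0) (hc : c ≠ ∞) :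
    ((c • μ) Set.univ)⁻¹ • (c • μ) = μ := by
  rw [Measure.smul_apply, measure_univ, smul_eq_mul, mul_one, smul_smul,
    ENNReal.inv_mul_cancel hc₀ hc, one_smul]

lemma gaussianPDFReal_mul_exp (m y : ℝ) {v σ : ℝ≥0} (hv : v ≠ 0) (hσ : σ ≠ 0) (r : ℝ) :
    gaussianPDFReal m v r * exp (-(r - y) ^ 2 / (2 * (σ : ℝ) ^ 2)) =
      √((σ : ℝ) ^ 2 / (v + σ ^ 2)) * exp (-(y - m) ^ 2 / (2 * (v + (σ : ℝ) ^ 2))) *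
        gaussianPDFReal ((y * v + m * σ ^ 2) / (v + σ ^ 2)) (v * σ ^ 2 / (v + σ ^ 2)) r := by
  have hv₀ : (0 : ℝ) < v := by positivity
  have hσ₀ : (0 : ℝ) < σ := by positivity
  have hsqrt : √((σ : ℝ) ^ 2 / (v + σ ^ 2)) * (√(2 * π * (v * σ ^ 2 / (v + σ ^ 2))))⁻¹ =
      (√(2 * π * v))⁻¹ := by
    rw [← sqrt_inv, ← sqrt_mul (by positivity), ← sqrt_inv]
    congr 1
    field_simp [pi_pos.ne']
  have hcompleteSquare : -(r - m) ^ 2 / (2 * (v : ℝ)) + -(r - y) ^ 2 / (2 * σ ^ 2) =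
      -(y - m) ^ 2 / (2 * (v + (σ : ℝ) ^ 2)) +
        -(r - (y * v + m * σ ^ 2) / (v + σ ^ 2)) ^ 2 / (2 * (v * σ ^ 2 / (v + σ ^ 2))) := by
    field_simp
    ring
  simp only [gaussianPDFReal, NNReal.coe_div, NNReal.coe_mul, NNReal.coe_add, NNReal.coe_pow]
  rw [mul_assoc, ← exp_add, hcompleteSquare, exp_add, ← hsqrt]
  ring

lemma gaussianReal_withDensity_exp (m y : ℝ) (v : ℝ≥0) {σ : ℝ≥0} (hσ : σ ≠ 0) :
    (gaussianReal m v).withDensity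
        (fun r ↦ ENNReal.ofReal (exp (-(r - y) ^ 2 / (2 * (σ : ℝ) ^ 2)))) =
      ENNReal.ofReal
          (√((σ : ℝ) ^ 2 / (v + σ ^ 2)) * exp (-(y - m) ^ 2 / (2 * (v + (σ : ℝ) ^ 2)))) •
        gaussianReal ((y * v + m * σ ^ 2) / (v + σ ^ 2)) (v * σ ^ 2 / (v + σ ^ 2)) := by
  rcases eq_or_ne v 0 with rfl | hv
  · have hσ₀ : (σ : ℝ) ^ 2 ≠ 0 := by positivity
    simp only [dirac_withDensity, gaussianReal_zero_var, NNReal.coe_zero, zero_add, zero_mul,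
      mul_zero, div_self hσ₀, sqrt_one, one_mul, zero_div, mul_div_cancel_right₀ _ hσ₀]
    rw [← neg_sub, neg_sq]
  · have hv' : v * σ ^ 2 / (v + σ ^ 2) ≠ 0 := by positivity
    rw [gaussianReal_of_var_ne_zero _ hv, gaussianReal_of_var_ne_zero _ hv',
      ← withDensity_mul _ (measurable_gaussianPDF _ _) (by fun_prop),
      ← withDensity_smul _ (measurable_gaussianPDF _ _)]
    congr 1
    ext r
    simp only [Pi.mul_apply, Pi.smul_apply, gaussianPDF, smul_eq_mul]
    rw [← ENNReal.ofReal_mul (gaussianPDFReal_nonneg _ _ _), gaussianPDFReal_mul_exp m y hv hσ,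
      ENNReal.ofReal_mul (by positivity)]

lemma gaussianReal_bayesUpdate (m y : ℝ) (v : ℝ≥0) {σ : ℝ≥0} (hσ : σ ≠ 0) :
    let q := (gaussianReal m v).withDensity
      (fun r ↦ ENNReal.ofReal (exp (-(r - y) ^ 2 / (2 * (σ : ℝ) ^ 2))))
    (q Set.univ)⁻¹ • q =
      gaussianReal ((y * v + m * σ ^ 2) / (v + σ ^ 2)) (v * σ ^ 2 / (v + σ ^ 2)) := by
  intro q
  rw [show q = _ from gaussianReal_withDensity_exp m y v hσ]
  exact inv_measure_univ_smul_smul _ (by simp; positivity) ENNReal.ofReal_ne_top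

lemma posteriorVariance_succ (ξ : ℝ≥0) {σ : ℝ≥0} (hσ : σ ≠ 0) (n : ℕ) :
    ξ ^ 2 * σ ^ 2 / (n * ξ ^ 2 + σ ^ 2) * σ ^ 2 / (ξ ^ 2 * σ ^ 2 / (n * ξ ^ 2 + σ ^ 2) + σ ^ 2) =
      ξ ^ 2 * σ ^ 2 / ((n + 1 : ℕ) * ξ ^ 2 + σ ^ 2) := by
  rw [← NNReal.coe_inj]
  push_cast
  field_simp
  ring

lemma posteriorMean_succ (S y δ : ℝ) (ξ : ℝ≥0) {σ : ℝ≥0} (hσ : σ ≠ 0) (n : ℕ) :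
    (y * ((ξ ^ 2 * σ ^ 2 / (n * ξ ^ 2 + σ ^ 2) : ℝ≥0) : ℝ) +
        (S * ξ ^ 2 + δ * σ ^ 2) / (n * ξ ^ 2 + σ ^ 2) * σ ^ 2) /
      (((ξ ^ 2 * σ ^ 2 / (n * ξ ^ 2 + σ ^ 2) : ℝ≥0) : ℝ) + σ ^ 2) =
      ((y + S) * ξ ^ 2 + δ * σ ^ 2) / ((n + 1 : ℕ) * ξ ^ 2 + σ ^ 2) := by
  push_cast
  field_simp
  ring

theorem gaussian_mean_learning_closed_form_general
    (σ ξ : ℝ≥0) (hσ : 0 < σ) (δ : ℝ) (L : List ℝ) :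
    L.foldr
      (fun (y : ℝ) (p : Measure ℝ) =>
        let q : Measure ℝ :=
          p.withDensity (fun r => ENNReal.ofReal (Real.exp (-(r - y) ^ 2 / (2 * (σ : ℝ) ^ 2))))
        (q Set.univ)⁻¹ • q)
      (gaussianReal δ (ξ ^ 2)) =
    gaussianReal
      ((L.sum * (ξ : ℝ) ^ 2 + δ * (σ : ℝ) ^ 2) / ((L.length : ℝ) * (ξ : ℝ) ^ 2 + (σ : ℝ) ^ 2))
      ((ξ ^ 2 * σ ^ 2) / ((L.length : ℝ≥0) * ξ ^ 2 + σ ^ 2)) := by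
  induction L with
  | nil =>
    have hσ₀ : (σ : ℝ) ^ 2 ≠ 0 := by positivity
    simp [hσ₀, hσ.ne']
  | cons y T ih =>
    rw [List.foldr_cons, ih, gaussianReal_bayesUpdate _ _ _ hσ.ne', List.length_cons,
      List.sum_cons, posteriorVariance_succ _ hσ.ne', posteriorMean_succ _ _ _ _ hσ.ne']

theorem gaussian_mean_learning_closed_form
    (σ ξ : ℝ≥0) (hσ : 0 < σ) (hξ : 0 < ξ) (δ : ℝ) (L : List ℝ) :
    L.foldr
      (fun (y : ℝ) (p : Measure ℝ) =>
        let q : Measure ℝ :=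
          p.withDensity (fun r => ENNReal.ofReal (Real.exp (-(r - y) ^ 2 / (2 * (σ : ℝ) ^ 2))))
        (q Set.univ)⁻¹ • q)
      (gaussianReal δ (ξ ^ 2)) =
    gaussianReal
      ((L.sum * (ξ : ℝ) ^ 2 + δ * (σ : ℝ) ^ 2) / ((L.length : ℝ) * (ξ : ℝ) ^ 2 + (σ : ℝ) ^ 2))
      ((ξ ^ 2 * σ ^ 2) / ((L.length : ℝ≥0) * ξ ^ 2 + σ ^ 2)) :=
  gaussian_mean_learning_closed_form_general σ ξ hσ δ L
end

section
/- Convergence of posterior parameters: fix σ > 0, ξ > 0, ξ₂ > 0 and δ, δ₂ : ℝ. For every ε > 0 and every C > 0 there exists N : ℕ such that for all natural numbers n > N and all S : ℝ with |S| ≤ C·n, both |(S·ξ² + δ·σ²)/(n·ξ² + σ²) − (S·ξ₂² + δ₂·σ²)/(n·ξ₂² + σ²)| < ε and |Real.log ((n·ξ²·ξ₂² + ξ²·σ²)/(n·ξ²·ξ₂² + ξ₂²·σ²))| < ε. -/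
/-!
Put `a = ξ²`, `b = ξ₂²`, `s = σ²`. Over the common denominator `(n a + s)(n b + s) ≥ n² a b` the
difference of the posterior means has numerator `s (S (a - b) + n (δ b - δ₂ a) + s (δ - δ₂))`, which is
`O(n)` uniformly in `|S| ≤ C n`; so the difference is `O(1/n)`. The ratio of the variance denominators is
`(n a b + a s) / (n a b + b s) → 1`, so its logarithm tends to `0`.
-/

open Filter Topology

lemma abs_posterior_mean_sub_le {a b s x S C δ δ₂ : ℝ} (ha : 0 < a) (hb : 0 < b) (hs : 0 ≤ s)
    (hx : 1 ≤ x) (hS : |S| ≤ C * x) :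
    |(S * a + δ * s) / (x * a + s) - (S * b + δ₂ * s) / (x * b + s)| ≤
      s * (C * |a - b| + |δ * b - δ₂ * a| + s * |δ - δ₂|) / (a * b) / x := by
  have hx₀ : 0 < x := by linarith
  have hda : 0 < x * a + s := by positivity
  have hdb : 0 < x * b + s := by positivity
  have hnum : |(S * a + δ * s) * (x * b + s) - (x * a + s) * (S * b + δ₂ * s)| ≤
      x * (s * (C * |a - b| + |δ * b - δ₂ * a| + s * |δ - δ₂|)) := by
    calc _ = |s * (S * (a - b) + x * (δ * b - δ₂ * a) + s * (δ - δ₂))| := by ring_nf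
      _ = s * |S * (a - b) + x * (δ * b - δ₂ * a) + s * (δ - δ₂)| := by
          rw [abs_mul, abs_of_nonneg hs]
      _ ≤ s * (|S| * |a - b| + x * |δ * b - δ₂ * a| + s * |δ - δ₂|) := by
          gcongr
          refine (abs_add_three _ _ _).trans_eq ?_
          rw [abs_mul, abs_mul, abs_mul, abs_of_pos hx₀, abs_of_nonneg hs]
      _ ≤ x * (s * (C * |a - b| + |δ * b - δ₂ * a| + s * |δ - δ₂|)) := by
          have hSab : |S| * |a - b| ≤ C * x * |a - b| := by gcongr
          have hss : s * |δ - δ₂| ≤ x * (s * |δ - δ₂|) :=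
            le_mul_of_one_le_left (by positivity) hx
          nlinarith [mul_nonneg hs (abs_nonneg (δ * b - δ₂ * a))]
  have hden : x * a * (x * b) ≤ (x * a + s) * (x * b + s) := by
    gcongr <;> linarith
  rw [div_sub_div _ _ hda.ne' hdb.ne', abs_div, abs_of_pos (mul_pos hda hdb)]
  calc _ ≤ x * (s * (C * |a - b| + |δ * b - δ₂ * a| + s * |δ - δ₂|)) / (x * a * (x * b)) :=
        div_le_div₀ ((abs_nonneg _).trans hnum) hnum (by positivity) hden
    _ = _ := by field_simp

lemma tendsto_mul_add_div_mul_add_atTop {c : ℝ} (hc : c ≠ 0) (p q : ℝ) :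
    Tendsto (fun x : ℝ => (c * x + p) / (c * x + q)) atTop (𝓝 1) := by
  have hlim : Tendsto (fun x : ℝ => (c + p * x⁻¹) / (c + q * x⁻¹)) atTop
      (𝓝 ((c + p * 0) / (c + q * 0))) :=
    (tendsto_const_nhds.add (tendsto_inv_atTop_zero.const_mul p)).div
      (tendsto_const_nhds.add (tendsto_inv_atTop_zero.const_mul q)) (by simpa using hc)
  rw [mul_zero, mul_zero, add_zero, div_self hc] at hlim
  refine hlim.congr' ?_
  filter_upwards [eventually_gt_atTop 0] with x hx
  field_simp

lemma tendsto_log_posterior_variance_ratio {a b : ℝ} (ha : a ≠ 0) (hb : b ≠ 0) (s : ℝ) :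
    Tendsto (fun n : ℕ => Real.log (((n : ℝ) * a * b + a * s) / ((n : ℝ) * a * b + b * s)))
      atTop (𝓝 0) := by
  have hratio := (tendsto_mul_add_div_mul_add_atTop (mul_ne_zero ha hb) (a * s) (b * s)).comp
    tendsto_natCast_atTop_atTop
  rw [← Real.log_one]
  refine (hratio.log one_ne_zero).congr fun n => ?_
  simp only [Function.comp_apply]
  ring_nf

theorem gaussian_posterior_parameters_convergence_general
    (σ ξ ξ₂ : ℝ) (hξ : 0 < ξ) (hξ₂ : 0 < ξ₂) (δ δ₂ : ℝ) :
    ∀ ε : ℝ, 0 < ε → ∀ C : ℝ, 0 < C → ∃ N : ℕ, ∀ n : ℕ, N < n → ∀ S : ℝ, |S| ≤ C * n →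
      |(S * ξ ^ 2 + δ * σ ^ 2) / ((n : ℝ) * ξ ^ 2 + σ ^ 2) -
        (S * ξ₂ ^ 2 + δ₂ * σ ^ 2) / ((n : ℝ) * ξ₂ ^ 2 + σ ^ 2)| < ε ∧
      |Real.log (((n : ℝ) * ξ ^ 2 * ξ₂ ^ 2 + ξ ^ 2 * σ ^ 2) /
        ((n : ℝ) * ξ ^ 2 * ξ₂ ^ 2 + ξ₂ ^ 2 * σ ^ 2))| < ε := by
  intro ε hε C _
  have ha : 0 < ξ ^ 2 := by positivity
  have hb : 0 < ξ₂ ^ 2 := by positivity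
  have hmean : ∀ᶠ n : ℕ in atTop, ∀ S : ℝ, |S| ≤ C * n →
      |(S * ξ ^ 2 + δ * σ ^ 2) / ((n : ℝ) * ξ ^ 2 + σ ^ 2) -
        (S * ξ₂ ^ 2 + δ₂ * σ ^ 2) / ((n : ℝ) * ξ₂ ^ 2 + σ ^ 2)| < ε := by
    filter_upwards [eventually_ge_atTop 1,
      (tendsto_const_div_atTop_nhds_zero_nat _).eventually_lt_const hε] with n hn hbound S hS
    exact (abs_posterior_mean_sub_le ha hb (sq_nonneg σ) (by exact_mod_cast hn) hS).trans_lt hbound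
  have hlog := (tendsto_log_posterior_variance_ratio ha.ne' hb.ne' (σ ^ 2)).abs
  rw [abs_zero] at hlog
  obtain ⟨N, hN⟩ := eventually_atTop.1 (hmean.and (hlog.eventually_lt_const hε))
  exact ⟨N, fun n hn S hS => ⟨(hN n hn.le).1 S hS, (hN n hn.le).2⟩⟩

theorem gaussian_posterior_parameters_convergence
    (σ ξ ξ₂ : ℝ) (hσ : 0 < σ) (hξ : 0 < ξ) (hξ₂ : 0 < ξ₂) (δ δ₂ : ℝ) :
    ∀ ε : ℝ, 0 < ε → ∀ C : ℝ, 0 < C → ∃ N : ℕ, ∀ n : ℕ, N < n → ∀ S : ℝ, |S| ≤ C * n →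
      |(S * ξ ^ 2 + δ * σ ^ 2) / ((n : ℝ) * ξ ^ 2 + σ ^ 2) -
        (S * ξ₂ ^ 2 + δ₂ * σ ^ 2) / ((n : ℝ) * ξ₂ ^ 2 + σ ^ 2)| < ε ∧
      |Real.log (((n : ℝ) * ξ ^ 2 * ξ₂ ^ 2 + ξ ^ 2 * σ ^ 2) /
        ((n : ℝ) * ξ ^ 2 * ξ₂ ^ 2 + ξ₂ ^ 2 * σ ^ 2))| < ε :=
  gaussian_posterior_parameters_convergence_general σ ξ ξ₂ hξ hξ₂ δ δ₂
end

section
/- Second-moment bound for the truncated importance sampling estimator: let d be a measure on a measurable space α, g : α → ℝ a nonnegative measurable function, a > 0, and h : α → ℝ measurable. Let d' := d.withDensity (fun x => ENNReal.ofReal (g x)). Then ∫⁻ (ENNReal.ofReal (g x · h x · Set.indicator {x | g x ≤ a} 1 x))² dd(x) ≤ ENNReal.ofReal a * ∫⁻ ENNReal.ofReal ((h x)²) dd'(x). -/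
open MeasureTheory ProbabilityTheory
open scoped NNReal ENNReal

theorem truncated_importance_second_moment_bound
    {α : Type*} [MeasurableSpace α]
    (d : Measure α) (g : α → ℝ) (hg : Measurable g) (hg0 : ∀ x, 0 ≤ g x)
    (a : ℝ) (ha : 0 < a) (h : α → ℝ) (hh : Measurable h) :
    (∫⁻ x, (ENNReal.ofReal (g x * h x * Set.indicator {x | g x ≤ a} 1 x)) ^ 2
        ∂d) ≤
      ENNReal.ofReal a *
        ∫⁻ x, ENNReal.ofReal ((h x) ^ 2)
          ∂(d.withDensity (fun x => ENNReal.ofReal (g x))) := by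
  rw [lintegral_withDensity_eq_lintegral_mul _ hg.ennreal_ofReal
    ((hh.pow_const 2).ennreal_ofReal)]
  rw [← lintegral_const_mul _ (by
    exact (hg.ennreal_ofReal.mul (hh.pow_const 2).ennreal_ofReal))]
  refine lintegral_mono fun x => ?_
  set z := g x * h x * Set.indicator {x | g x ≤ a} 1 x with hz
  calc ENNReal.ofReal z ^ 2
      ≤ ENNReal.ofReal |z| ^ 2 :=
        pow_le_pow_left' (ENNReal.ofReal_le_ofReal (le_abs_self z)) 2
    _ = ENNReal.ofReal (|z| ^ 2) := (ENNReal.ofReal_pow (abs_nonneg z) 2).symm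
    _ = ENNReal.ofReal (z ^ 2) := by rw [sq_abs]
    _ ≤ ENNReal.ofReal (a * (g x * h x ^ 2)) := by
        apply ENNReal.ofReal_le_ofReal
        by_cases hx : g x ≤ a
        · have : Set.indicator {x | g x ≤ a} (1 : α → ℝ) x = 1 :=
            Set.indicator_of_mem hx 1
          rw [hz, this, mul_one, mul_pow]
          have h1 : g x ^ 2 ≤ a * g x := by
            rw [sq]; exact mul_le_mul_of_nonneg_right hx (hg0 x)
          calc g x ^ 2 * h x ^ 2 ≤ a * g x * h x ^ 2 :=
              mul_le_mul_of_nonneg_right h1 (sq_nonneg _)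
            _ = a * (g x * h x ^ 2) := by ring
        · have : Set.indicator {x | g x ≤ a} (1 : α → ℝ) x = 0 :=
            Set.indicator_of_notMem hx 1
          rw [hz, this, mul_zero]
          norm_num
          have hgx := hg0 x
          positivity
    _ = ENNReal.ofReal a * (ENNReal.ofReal (g x) * ENNReal.ofReal (h x ^ 2)) := by
        rw [← ENNReal.ofReal_mul (hg0 x), ← ENNReal.ofReal_mul ha.le]
end

section
/- Characterization of the union-bound ⊤⊤-lifting: let μ be a measure on a measurable space X with μ Set.univ ≤ 1 (a subprobability measure), let E ⊆ X be measurable, and let α : ℝ≥0∞. Then the following are equivalent: (i) for every β : ℝ≥0∞ and every measurable g : X → ℝ≥0∞ with g ≤ 1 and g x ≤ β for all x ∉ E, one has ∫⁻ g dμ ≤ α + β; (ii) μ E ≤ α. -/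
open MeasureTheory
open scoped NNReal ENNReal

theorem unionBound_TTlifting_characterization
    {X : Type*} [MeasurableSpace X]
    (μ : Measure X) (hμ : μ Set.univ ≤ 1)
    (E : Set X) (hE : MeasurableSet E) (α : ℝ≥0∞) :
    (∀ β : ℝ≥0∞, ∀ g : X → ℝ≥0∞, Measurable g → (∀ x, g x ≤ 1) →
        (∀ x ∉ E, g x ≤ β) → ∫⁻ x, g x ∂μ ≤ α + β) ↔
      μ E ≤ α := by
  constructor
  · intro h
    have := h 0 (E.indicator 1) (measurable_one.indicator hE)
      (fun x => by by_cases hx : x ∈ E <;> simp [Set.indicator, hx])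
      (fun x hx => by simp [Set.indicator, hx])
    simpa [lintegral_indicator_one hE] using this
  · intro h β g hg hg1 hgβ
    calc ∫⁻ x, g x ∂μ
        = ∫⁻ x in E, g x ∂μ + ∫⁻ x in Eᶜ, g x ∂μ := by
          rw [← lintegral_add_compl _ hE]
      _ ≤ ∫⁻ _ in E, 1 ∂μ + ∫⁻ _ in Eᶜ, β ∂μ := by
          exact add_le_add (setLIntegral_mono measurable_const fun x _ => hg1 x)
            (setLIntegral_mono measurable_const fun x hx => hgβ x hx)
      _ = μ E + β * μ Eᶜ := by
          simp [lintegral_const, Measure.restrict_apply_univ, mul_comm]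
      _ ≤ α + β * 1 := by
          gcongr
          exact le_trans (measure_mono (Set.subset_univ _)) hμ
      _ = α + β := by rw [mul_one]
end
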